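/- Every element s of S_{n,l}(H) of length at least l−1 can be written as s = w·x_{j_1}⋯x_{j_{l-1}} for some indices j_1, ..., j_{l-1} ∈ {1,...,n} and some element w of the free submonoid F generated by one representative from each H-orbit; moreover the factor w ∈ F is unique. -/

import Mathlib

/-- The rewriting relation for the permutation-relation monoid `S_{n,l}(H)`. -/
def permRel (n l : ℕ) (H : Subgroup (Equiv.Perm (Fin n))) :
    FreeMonoid (Fin n) → FreeMonoid (Fin n) → Prop := fun a b =>
  ∃ σ ∈ H, ∃ w : Fin l → Fin n,
    a = FreeMonoid.ofList (List.ofFn fun i => w i) ∧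
    b = FreeMonoid.ofList (List.ofFn fun i => σ (w i))

/-- The congruence on the free monoid generated by the permutation relations. -/
def permCon (n l : ℕ) (H : Subgroup (Equiv.Perm (Fin n))) : Con (FreeMonoid (Fin n)) :=
  conGen (permRel n l H)

/-- The monoid `S_{n,l}(H)`. -/
abbrev SM (n l : ℕ) (H : Subgroup (Equiv.Perm (Fin n))) := (permCon n l H).Quotient

/-- The generator `x_i` of `S_{n,l}(H)`. -/
def xg (n l : ℕ) (H : Subgroup (Equiv.Perm (Fin n))) (i : Fin n) : SM n l H :=
  (permCon n l H).mk' (FreeMonoid.of i)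

/-! Applying `σ⁻¹ ∈ H` to the window of `l` letters starting at a letter `σ (x_t)` turns that
letter into its orbit representative `x_t` and leaves a word of the same length behind it;
repeating this pushes every letter but the last `l - 1` into `F`. For uniqueness, each defining
relation replaces letters by letters of the same `H`-orbit, so the word of orbits of the letters
is an invariant of `S_{n,l}(H)`; it determines the `F`-factor because the representatives lie in
distinct orbits. -/

open FreeMonoid MulAction

section

variable {n l : ℕ} {H : Subgroup (Equiv.Perm (Fin n))}

theorem prod_map_xg (u : List (Fin n)) :
    (u.map (xg n l H)).prod = (permCon n l H).mk' (ofList u) := by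
  rw [← lift_ofList]
  exact DFunLike.congr_fun
    (hom_eq (f := lift (xg n l H)) (g := (permCon n l H).mk') fun _ => rfl) _

theorem prod_map_xg_map_perm {σ : Equiv.Perm (Fin n)} (hσ : σ ∈ H) (v : List (Fin n))
    (hv : v.length = l) :
    ((v.map σ).map (xg n l H)).prod = (v.map (xg n l H)).prod := by
  subst hv
  have hrel : permRel n v.length H (ofList v) (ofList (v.map σ)) :=
    ⟨σ, hσ, fun i => v[i], by simp, by simp⟩
  rw [prod_map_xg, prod_map_xg]
  exact ((Con.eq _).2 (ConGen.Rel.of _ _ hrel)).symm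

theorem exists_prod_map_xg_eq_lift_mul (hl : 1 ≤ l) {r : ℕ} {reps : Fin r → Fin n}
    (hreps : ∀ a, ∃ t, ∃ σ ∈ H, σ (reps t) = a) (u : List (Fin n))
    (hu : l - 1 ≤ u.length) :
    ∃ (w : FreeMonoid (Fin r)) (j : Fin (l - 1) → Fin n),
      (u.map (xg n l H)).prod =
        lift (fun t => xg n l H (reps t)) w * ((List.ofFn j).map (xg n l H)).prod := by
  obtain ⟨m, hm⟩ := Nat.exists_eq_add_of_le' hu
  induction m generalizing u with
  | zero =>
    refine ⟨1, fun i => u[(i : ℕ)]'(by omega), ?_⟩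
    rw [map_one, one_mul]
    congr 2
    exact List.ext_getElem (by simp [hm]) fun _ _ _ => by simp
  | succ m ih =>
    obtain ⟨a, u', rfl⟩ := List.exists_cons_of_length_pos (by omega : 0 < u.length)
    obtain ⟨t, σ, hσ, rfl⟩ := hreps a
    obtain ⟨w, j, hw⟩ := ih ((u'.take (l - 1)).map ⇑σ⁻¹ ++ u'.drop (l - 1))
      (by simp at hm ⊢; omega) (by simp at hm ⊢; omega)
    refine ⟨of t * w, j, ?_⟩
    have hwindow := prod_map_xg_map_perm (l := l) (H.inv_mem hσ) (σ (reps t) :: u'.take (l - 1))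
      (by simp at hm ⊢; omega)
    calc ((σ (reps t) :: u').map (xg n l H)).prod
        = ((σ (reps t) :: u'.take (l - 1)).map (xg n l H)).prod *
            ((u'.drop (l - 1)).map (xg n l H)).prod := by
          rw [← List.prod_append, ← List.map_append, List.cons_append, List.take_append_drop]
      _ = xg n l H (reps t) *
            (((u'.take (l - 1)).map ⇑σ⁻¹ ++ u'.drop (l - 1)).map (xg n l H)).prod := by
          rw [← hwindow]
          simp [mul_assoc]
      _ = _ := by rw [hw, map_mul, lift_eval_of, mul_assoc]

def orbitWord : SM n l H →* FreeMonoid (orbitRel.Quotient H (Fin n)) :=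
  (permCon n l H).lift (FreeMonoid.map (Quotient.mk _)) <| Con.conGen_le.2 <| by
    rintro _ _ ⟨σ, hσ, w, rfl, rfl⟩
    rw [Con.ker_rel]
    refine congrArg ofList ?_
    simp only [toList_ofList, List.map_ofFn]
    exact congrArg List.ofFn <| funext fun i =>
      (Quotient.sound (s := orbitRel H (Fin n)) ⟨⟨σ, hσ⟩, rfl⟩).symm


theorem orbitWord_prod_map_xg (v : List (Fin n)) :
    orbitWord ((v.map (xg n l H)).prod) = FreeMonoid.map (Quotient.mk _) (ofList v) := by
  rw [prod_map_xg]
  rfl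

theorem eq_of_lift_mul_prod_map_xg_eq {r k : ℕ} {reps : Fin r → Fin n}
    (hreps : ∀ t t', (∃ σ ∈ H, σ (reps t) = reps t') → t = t') {w w' : FreeMonoid (Fin r)}
    {j j' : Fin k → Fin n}
    (h : lift (fun t => xg n l H (reps t)) w * ((List.ofFn j).map (xg n l H)).prod =
      lift (fun t => xg n l H (reps t)) w' * ((List.ofFn j').map (xg n l H)).prod) :
    w = w' := by
  have hinj : Function.Injective fun t => Quotient.mk (orbitRel H (Fin n)) (reps t) := by
    intro t t' htt'
    obtain ⟨σ, hσ⟩ := Quotient.exact htt'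
    exact (hreps t' t ⟨σ, σ.2, hσ⟩).symm
  have hlift (w : FreeMonoid (Fin r)) :
      lift (fun t => xg n l H (reps t)) w = ((w.toList.map reps).map (xg n l H)).prod := by
    rw [lift_apply, List.map_map]
    rfl
  rw [hlift, hlift, ← List.prod_append, ← List.map_append, ← List.prod_append,
    ← List.map_append] at h
  replace h := congrArg (fun x => toList (orbitWord x)) h
  rw [orbitWord_prod_map_xg, orbitWord_prod_map_xg] at h
  simp only [toList_map, toList_ofList, List.map_append, List.map_map] at h
  exact toList.injective (List.map_injective_iff.2 hinj (List.append_inj' h (by simp)).1)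

end

theorem normal_form_right (n l : ℕ) (hl : 2 ≤ l) (H : Subgroup (Equiv.Perm (Fin n)))
    (r : ℕ) (reps : Fin r → Fin n)
    (horb : ∀ j : Fin n, ∃! t : Fin r, ∃ σ ∈ H, σ (reps t) = j)
    (u : List (Fin n)) (hu : l - 1 ≤ u.length) :
    ∃! w : FreeMonoid (Fin r), ∃ j : Fin (l - 1) → Fin n,
      (List.map (xg n l H) u).prod =
        (FreeMonoid.lift fun t => xg n l H (reps t)) w *
          (List.map (xg n l H) (List.ofFn j)).prod := by
  obtain ⟨w, j, hw⟩ := exists_prod_map_xg_eq_lift_mul (by omega) (fun a => (horb a).exists) u hu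
  refine ⟨w, ⟨j, hw⟩, fun w' ⟨j', hw'⟩ => ?_⟩
  have hreps_distinct (t t' : Fin r) (h : ∃ σ ∈ H, σ (reps t) = reps t') : t = t' :=
    (horb (reps t')).unique h ⟨1, H.one_mem, rfl⟩
  exact eq_of_lift_mul_prod_map_xg_eq hreps_distinct (hw'.symm.trans hw)
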